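/- Let Δ be a countably infinite ordered homogeneous structure with countable relational signature. Then the age of Δ is a Ramsey class if and only if the automorphism group Aut(Δ), endowed with the topology of pointwise convergence, is extremely amenable. -/

import Mathlib

open FirstOrder FirstOrder.Language

namespace PaperDef

/-- The structure `M` is *ordered*: some binary relation symbol of the signature
denotes a linear order on the domain. -/
def Ordered (L : Language) (M : Type*) [L.Structure M] : Prop :=
  ∃ r : L.Relations 2, IsLinearOrder M (fun a b => Structure.RelMap r ![a, b])

/-- A class of structures is a *Ramsey class*. -/
def RamseyClass {L : Language} (K : Set (CategoryTheory.Bundled.{0} L.Structure)) : Prop :=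
  ∀ k : ℕ, 1 ≤ k → ∀ H ∈ K, ∀ P ∈ K, ∃ S ∈ K,
    ∀ χ : {Q : L.Substructure S // Nonempty (P ≃[L] Q)} → Fin k,
      ∃ e : H ↪[L] S,
        ∀ Q₁ Q₂ : {Q : L.Substructure S // Nonempty (P ≃[L] Q)},
          (Q₁.1 : Set S) ⊆ Set.range e → (Q₂.1 : Set S) ⊆ Set.range e → χ Q₁ = χ Q₂

/-- `M` is *finitely bounded*: membership of a finite(ly generated) structure in the age of `M`
is characterized by finitely many forbidden substructures. -/
def FinitelyBounded (L : Language) (M : Type) [L.Structure M] : Prop :=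
  ∃ (k : ℕ) (F : Fin k → CategoryTheory.Bundled.{0} L.Structure),
    (∀ i, Structure.FG L (F i)) ∧
    ∀ A : CategoryTheory.Bundled.{0} L.Structure, Structure.FG L A →
      (A ∈ L.age M ↔ ∀ i, ¬ Nonempty ((F i) ↪[L] A))

/-- The `L'`-structure on `M` is a *reduct* of the `L`-structure on `M`:
every relation of the former is first-order definable in the latter. -/
def IsReduct (L L' : Language) (M : Type*) [L.Structure M] [L'.Structure M] : Prop :=
  ∀ (n : ℕ) (r : L'.Relations n), ∃ φ : L.Formula (Fin n),
    ∀ x : Fin n → M, Structure.RelMap r x ↔ φ.Realize x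

/-- Two `n`-tuples have the same (complete first-order) type. -/
def SameType (L : Language) (M : Type*) [L.Structure M] {n : ℕ} (a b : Fin n → M) : Prop :=
  ∀ φ : L.Formula (Fin n), φ.Realize a ↔ φ.Realize b

/-- A function is *canonical*: it maps tuples of equal types to tuples of equal types. -/
def Canonical (L L' : Language) (X Ω : Type*) [L.Structure X] [L'.Structure Ω]
    (f : X → Ω) : Prop :=
  ∀ (n : ℕ) (a b : Fin n → X), SameType L X a b →
    SameType L' Ω (fun i => f (a i)) (fun i => f (b i))

/-- A function is *canonical on a set `F`*. -/
def CanonicalOn (L L' : Language) (X Ω : Type*) [L.Structure X] [L'.Structure Ω]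
    (F : Set X) (f : X → Ω) : Prop :=
  ∀ (n : ℕ) (a b : Fin n → X), (∀ i, a i ∈ F) → (∀ i, b i ∈ F) → SameType L X a b →
    SameType L' Ω (fun i => f (a i)) (fun i => f (b i))

/-- `M` is ω-categorical: every countable model of its complete theory is isomorphic to it. -/
def OmegaCategorical (L : Language) (M : Type) [L.Structure M] : Prop :=
  ∀ (N : Type) [L.Structure N], Countable N →
    (∀ φ : L.Sentence, φ ∈ L.completeTheory M → N ⊨ φ) → Nonempty (M ≃[L] N)

/-- Primitive positive formulas: built from atomic formulas using `∧` and `∃`. -/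
inductive IsPrimitivePositive {L : Language} {α : Type*} :
    ∀ {n : ℕ}, L.BoundedFormula α n → Prop
  | atomic {n : ℕ} {φ : L.BoundedFormula α n} (h : φ.IsAtomic) : IsPrimitivePositive φ
  | inf {n : ℕ} {φ ψ : L.BoundedFormula α n} :
      IsPrimitivePositive φ → IsPrimitivePositive ψ → IsPrimitivePositive (φ ⊓ ψ)
  | ex {n : ℕ} {φ : L.BoundedFormula α (n + 1)} :
      IsPrimitivePositive φ → IsPrimitivePositive φ.ex

/-- Existential formulas: existentially quantified quantifier-free formulas. -/
inductive IsExistential {L : Language} {α : Type*} :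
    ∀ {n : ℕ}, L.BoundedFormula α n → Prop
  | of_isQF {n : ℕ} {φ : L.BoundedFormula α n} (h : φ.IsQF) : IsExistential φ
  | ex {n : ℕ} {φ : L.BoundedFormula α (n + 1)} : IsExistential φ → IsExistential φ.ex

/-- Existential positive formulas: built from atomic formulas using `∧`, `∨` and `∃`. -/
inductive IsExistentialPositive {L : Language} {α : Type*} :
    ∀ {n : ℕ}, L.BoundedFormula α n → Prop
  | atomic {n : ℕ} {φ : L.BoundedFormula α n} (h : φ.IsAtomic) : IsExistentialPositive φ
  | inf {n : ℕ} {φ ψ : L.BoundedFormula α n} :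
      IsExistentialPositive φ → IsExistentialPositive ψ → IsExistentialPositive (φ ⊓ ψ)
  | sup {n : ℕ} {φ ψ : L.BoundedFormula α n} :
      IsExistentialPositive φ → IsExistentialPositive ψ → IsExistentialPositive (φ ⊔ ψ)
  | ex {n : ℕ} {φ : L.BoundedFormula α (n + 1)} :
      IsExistentialPositive φ → IsExistentialPositive φ.ex

/-- A `k`-ary operation *preserves* an `m`-ary relation. -/
def Preserves {D : Type*} {k m : ℕ} (f : (Fin k → D) → D) (R : (Fin m → D) → Prop) : Prop :=
  ∀ rows : Fin k → Fin m → D, (∀ j, R (rows j)) → R (fun i => f (fun j => rows j i))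

/-- A unary operation *preserves* an `m`-ary relation. -/
def Preserves1 {D : Type*} {m : ℕ} (f : D → D) (R : (Fin m → D) → Prop) : Prop :=
  ∀ a : Fin m → D, R a → R (fun i => f (a i))

/-- An endomorphism of the structure `M`. -/
def IsEndo (L : Language) (M : Type*) [L.Structure M] (f : M → M) : Prop :=
  ∀ (n : ℕ) (r : L.Relations n) (x : Fin n → M),
    Structure.RelMap r x → Structure.RelMap r (fun i => f (x i))

/-- A self-embedding of the structure `M`. -/
def IsSelfEmb (L : Language) (M : Type*) [L.Structure M] (f : M → M) : Prop :=
  Function.Injective f ∧ ∀ (n : ℕ) (r : L.Relations n) (x : Fin n → M),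
    (Structure.RelMap r (fun i => f (x i)) ↔ Structure.RelMap r x)

/-- A polymorphism of the structure `M`. -/
def IsPoly (L : Language) (M : Type*) [L.Structure M] {k : ℕ} (f : (Fin k → M) → M) : Prop :=
  ∀ (n : ℕ) (r : L.Relations n), Preserves f (fun x : Fin n → M => Structure.RelMap r x)

/-- The set of endomorphisms of `M`. -/
def EndSet (L : Language) (M : Type*) [L.Structure M] : Set (M → M) :=
  {f | IsEndo L M f}

/-- Two tuples lie in the same orbit of the automorphism group. -/
def SameOrbit (L : Language) (M : Type*) [L.Structure M] {n : ℕ} (a b : Fin n → M) : Prop :=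
  ∃ α : M ≃[L] M, ∀ i, α (a i) = b i

/-- The subsets `s` and `t` induce isomorphic substructures. -/
def SetIso (L : Language) (X : Type*) [L.Structure X] (s t : Set X) : Prop :=
  ∃ g : s ≃ t, ∀ (n : ℕ) (r : L.Relations n) (x : Fin n → s),
    (Structure.RelMap r (fun j => ((x j : X))) ↔ Structure.RelMap r (fun j => ((g (x j) : t) : X)))

/-- The `L[[Fin n]]`-structure on `M` obtained by naming the constants `c 0, …, c (n-1)`. -/
def withConstantsStruct (L : Language) {M : Type*} [L.Structure M] {n : ℕ} (c : Fin n → M) :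
    (L[[Fin n]]).Structure M :=
  letI := constantsOn.structure c
  inferInstance

/-- Two sequences of `n` tuples from a product `Ξ₁ × ⋯ × Ξₘ` have the same type:
componentwise, the corresponding `n`-tuples have the same type. -/
def SameSeqType {m : ℕ} (Ls : Fin m → Language) (Xs : Fin m → Type*)
    [∀ i, (Ls i).Structure (Xs i)] {n : ℕ} (a b : Fin n → ∀ i, Xs i) : Prop :=
  ∀ i, SameType (Ls i) (Xs i) (fun j => a j i) (fun j => b j i)

/-- A function defined on a product of structures is canonical. -/
def CanonicalProd {m : ℕ} (Ls : Fin m → Language) (Xs : Fin m → Type*)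
    [∀ i, (Ls i).Structure (Xs i)] (L' : Language) (Ω : Type*) [L'.Structure Ω]
    (f : (∀ i, Xs i) → Ω) : Prop :=
  ∀ (n : ℕ) (a b : Fin n → ∀ i, Xs i), SameSeqType Ls Xs a b →
    SameType L' Ω (fun j => f (a j)) (fun j => f (b j))

end PaperDef

namespace PaperDef

/-- The automorphism group of a first-order structure. -/
instance autGroup (L : Language) (M : Type*) [L.Structure M] : Group (M ≃[L] M) where
  mul g h := g.comp h
  one := Language.Equiv.refl L M
  inv := Language.Equiv.symm
  mul_assoc a b c := Language.Equiv.comp_assoc c b a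
  one_mul := Language.Equiv.refl_comp
  mul_one := Language.Equiv.comp_refl
  inv_mul_cancel := Language.Equiv.symm_comp_self

/-- The topology of pointwise convergence on the automorphism group of a structure
(the domain being discrete). -/
instance autTopology (L : Language) (M : Type*) [L.Structure M] :
    TopologicalSpace (M ≃[L] M) :=
  TopologicalSpace.induced (fun g => (g : M → M))
    (@Pi.topologicalSpace M (fun _ => M) (fun _ => ⊥))

/-- A topological group is extremely amenable if every continuous action on a nonempty
compact Hausdorff space has a fixed point. -/
def ExtremelyAmenable (G : Type*) [Group G] [TopologicalSpace G] : Prop :=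
  ∀ (X : Type) [TopologicalSpace X] [CompactSpace X] [T2Space X] [Nonempty X]
    [MulAction G X], Continuous (fun p : G × X => p.1 • p.2) →
      ∃ x : X, ∀ g : G, g • x = x

end PaperDef

/-!
(⇐) The colourings of the copies of `P` in `M` by `k` colours form a compact space on which
`Aut M` acts continuously, because copies are finite. If the age is not Ramsey, compactness gives
a colouring of all copies in `M` with no monochromatic copy of `H`; such colourings form a
nonempty closed invariant set, which by extreme amenability contains a fixed colouring. By
homogeneity `Aut M` is transitive on copies, so a fixed colouring is constant: a contradiction.

(⇒) A continuous action on a compact space has a fixed point as soon as, for every finite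
`F ⊆ Aut M` and every finite open cover, some point is moved by `F` inside a single member of
the cover. By uniform continuity, automorphisms fixing a large enough finite set `A` move every
point by less than a given entourage. Colour each copy `g • A` of `A` by a point of a finite net
close to `g⁻¹ • x₀`; as `M` is ordered, `g` is determined on `A` by the copy. A monochromatic
copy `δ • H` of `H ⊇ A ∪ ⋃_{g ∈ F} g⁻¹ • A` then keeps all of `F • (δ⁻¹ • x₀)` close to one
point of the net.
-/

namespace PaperDef

open Set Topology Structure Uniformity
open scoped SetRel

section AutTopology

variable {L : Language} {M : Type*} [L.Structure M]

lemma eventually_forall_apply_eq {s : Set M} (hs : s.Finite) (g₀ : M ≃[L] M) :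
    ∀ᶠ g in 𝓝 g₀, ∀ a ∈ s, g a = g₀ a := by
  let _ : TopologicalSpace M := ⊥
  have : DiscreteTopology M := ⟨rfl⟩
  rw [nhds_induced]
  exact (hs.eventually_all.2 fun a _ => (continuous_apply a).continuousAt.eventually
    ((isOpen_discrete {g₀ a}).eventually_mem rfl)).comap _

lemma exists_finset_fixing_subset_of_mem_nhds_one {N : Set (M ≃[L] M)} (hN : N ∈ 𝓝 1) :
    ∃ A : Finset M, {g : M ≃[L] M | ∀ a ∈ A, g a = a} ⊆ N := by
  let _ : TopologicalSpace M := ⊥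
  have : DiscreteTopology M := ⟨rfl⟩
  rw [nhds_induced, Filter.mem_comap] at hN
  obtain ⟨t, ht, htN⟩ := hN
  rw [nhds_pi, Filter.mem_pi] at ht
  obtain ⟨I, hI, s, hs, hsub⟩ := ht
  refine ⟨hI.toFinset, fun g hg => htN (hsub fun a ha => ?_)⟩
  show g a ∈ s a
  rw [hg a (hI.mem_toFinset.2 ha)]
  exact mem_of_mem_nhds (hs a)

end AutTopology

section Rigidity

variable {L : Language} {M N : Type*} [L.Structure M] [L.Structure N]

noncomputable abbrev linearOrderOfIsLinearOrder {α : Type*} (R : α → α → Prop)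
    [IsLinearOrder α R] : LinearOrder α where
  le := R
  le_refl := refl_of R
  le_trans _ _ _ := trans_of R
  le_antisymm _ _ := antisymm_of R
  le_total := total_of R
  toDecidableLE := Classical.decRel R

theorem _root_.FirstOrder.Language.Embedding.map_rel_pair (f : N ↪[L] M) (r : L.Relations 2)
    (a b : N) : RelMap r ![f a, f b] ↔ RelMap r ![a, b] := by
  have : f ∘ ![a, b] = ![f a, f b] := by
    ext i
    fin_cases i <;> rfl
  rw [← this, f.map_rel]

theorem _root_.FirstOrder.Language.Embedding.eq_of_range_eq_of_ordered (hord : Ordered L M)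
    [Finite N] {f g : N ↪[L] M} (h : range f = range g) : f = g := by
  obtain ⟨r, hr⟩ := hord
  let _ : LinearOrder M := linearOrderOfIsLinearOrder fun a b : M => RelMap r ![a, b]
  have : IsLinearOrder N fun a b : N => RelMap r ![a, b] :=
    RelEmbedding.isLinearOrder (s := fun a b : M => RelMap r ![a, b])
      ⟨f.toEmbedding, f.map_rel_pair r _ _⟩
  let _ : LinearOrder N := linearOrderOfIsLinearOrder fun a b : N => RelMap r ![a, b]
  let toOrderEmbedding (φ : N ↪[L] M) : N ↪o M := .ofMapLEIff φ (φ.map_rel_pair r)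
  have : toOrderEmbedding f = toOrderEmbedding g := OrderEmbedding.range_inj.1 h
  exact DFunLike.coe_injective (congrArg (fun φ : N ↪o M => (φ : N → M)) this)

end Rigidity

/-- The copies of `P` in `M`: the objects coloured in `RamseyClass`. -/
abbrev Copy {L : Language} (P : CategoryTheory.Bundled L.Structure) (M : Type*) [L.Structure M] :
    Type _ :=
  {Q : L.Substructure M // Nonempty (P ≃[L] Q)}

namespace Copy

variable {L : Language} {P : CategoryTheory.Bundled L.Structure} {S M : Type*}
  [L.Structure S] [L.Structure M]

noncomputable def map (f : S ↪[L] M) (Q : Copy P S) : Copy P M :=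
  ⟨Q.1.map f.toHom, ⟨(f.substructureEquivMap Q.1).comp Q.2.some⟩⟩

lemma coe_map (f : S ↪[L] M) (Q : Copy P S) : ((map f Q).1 : Set M) = f '' Q.1 := rfl

lemma ext_coe {Q Q' : Copy P M} (h : (Q.1 : Set M) = Q'.1) : Q = Q' :=
  Subtype.ext (SetLike.coe_injective h)

lemma map_injective (f : S ↪[L] M) : Function.Injective (map (P := P) f) := fun Q Q' h =>
  ext_coe (f.injective.image_injective (by rw [← coe_map, ← coe_map, h]))

lemma exists_map_eq (f : S ↪[L] M) (Q : Copy P M) (hQ : (Q.1 : Set M) ⊆ range f) :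
    ∃ Q' : Copy P S, map f Q' = Q := by
  set Q' := Q.1.comap f.toHom
  have hQ' : Q'.map f.toHom = Q.1 := SetLike.coe_injective (image_preimage_eq_of_subset hQ)
  obtain ⟨φ⟩ := Q.2
  rw [← hQ'] at φ
  exact ⟨⟨Q', ⟨(f.substructureEquivMap Q').symm.comp φ⟩⟩, Subtype.ext hQ'⟩

noncomputable instance : MulAction (M ≃[L] M) (Copy P M) where
  smul g Q := map g.toEmbedding Q
  one_smul _ := ext_coe (image_id _)
  mul_smul g h _ := ext_coe (image_comp g h _)

lemma coe_smul (g : M ≃[L] M) (Q : Copy P M) : ((g • Q).1 : Set M) = g '' Q.1 := rfl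

lemma smul_congr {g h : M ≃[L] M} {Q : Copy P M} (hgh : ∀ a ∈ Q.1, g a = h a) : g • Q = h • Q :=
  ext_coe (image_congr hgh)

instance [Finite P] (Q : Copy P M) : Finite Q.1 :=
  Finite.of_equiv P Q.2.some.toEquiv

lemma finite_coe [Finite P] (Q : Copy P M) : (Q.1 : Set M).Finite :=
  Set.finite_coe_iff.1 (inferInstanceAs (Finite Q.1))

lemma finite_setOf_subset {s : Set M} (hs : s.Finite) :
    {Q : Copy P M | (Q.1 : Set M) ⊆ s}.Finite :=
  hs.finite_subsets.preimage fun _ _ _ _ h => ext_coe h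

lemma eventually_inv_smul_eq [Finite P] (Q : Copy P M) (g₀ : M ≃[L] M) :
    ∀ᶠ g in 𝓝 g₀, g⁻¹ • Q = g₀⁻¹ • Q := by
  filter_upwards [eventually_forall_apply_eq (g₀⁻¹ • Q).finite_coe g₀] with g hg
  rw [inv_smul_eq_iff, smul_congr hg, smul_inv_smul]

lemma exists_smul_eq (hhom : L.IsUltrahomogeneous M) [Finite P] (Q Q' : Copy P M) :
    ∃ g : M ≃[L] M, g • Q = Q' := by
  obtain ⟨g, hg⟩ := hhom Q.1 Substructure.FG.of_finite
    (Q'.1.subtype.comp (Q'.2.some.comp Q.2.some.symm).toEmbedding)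
  have hw : (fun x : Q.1 => g x) = Subtype.val ∘ (Q'.2.some.comp Q.2.some.symm) :=
    funext fun x => (DFunLike.congr_fun hg x).symm
  refine ⟨g, ext_coe ?_⟩
  rw [coe_smul, image_eq_range]
  change range (fun x : Q.1 => g x) = _
  rw [hw, (EquivLike.surjective _).range_comp]
  exact Subtype.range_coe

def self (A : L.Substructure M) : Copy (CategoryTheory.Bundled.of (c := L.Structure) A) M :=
  ⟨A, ⟨Language.Equiv.refl L A⟩⟩

instance (A : L.Substructure M) [Finite A] :
    Finite (CategoryTheory.Bundled.of (c := L.Structure) A) :=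
  ‹Finite A›

theorem apply_eq_of_smul_self_eq (hord : Ordered L M) {A : L.Substructure M} [Finite A]
    {v : M ≃[L] M} (hv : v • self A = self A) (a : M) (ha : a ∈ A) : v a = a := by
  have hrange : range (v.toEmbedding.comp A.subtype) = range A.subtype := by
    change range (v ∘ Subtype.val) = range Subtype.val
    rw [range_comp, Subtype.range_coe, Subtype.range_coe]
    exact congrArg (fun Q : Copy _ M => (Q.1 : Set M)) hv
  exact DFunLike.congr_fun (Embedding.eq_of_range_eq_of_ordered hord hrange) ⟨a, ha⟩

end Copy

section Colorings

variable {L : Language} {P : CategoryTheory.Bundled L.Structure} {H S M : Type*}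
  [L.Structure H] [L.Structure S] [L.Structure M] {κ : Type*}

def IsMonochromaticOn (χ : Copy P S → κ) (e : H ↪[L] S) : Prop :=
  ∀ Q₁ Q₂ : Copy P S, (Q₁.1 : Set S) ⊆ range e → (Q₂.1 : Set S) ⊆ range e → χ Q₁ = χ Q₂

theorem RamseyClass.exists_isMonochromaticOn {K : Set (CategoryTheory.Bundled.{0} L.Structure)}
    (hK : RamseyClass K) [Finite κ] [Nonempty κ] {H P : CategoryTheory.Bundled.{0} L.Structure}
    (hH : H ∈ K) (hP : P ∈ K) :
    ∃ S ∈ K, ∀ χ : Copy P S → κ, ∃ e : H ↪[L] S, IsMonochromaticOn χ e := by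
  obtain ⟨S, hS, hmono⟩ := hK (Nat.card κ) Nat.card_pos H hH P hP
  refine ⟨S, hS, fun χ => ?_⟩
  obtain ⟨e, he⟩ := hmono (Finite.equivFin κ ∘ χ)
  exact ⟨e, fun Q₁ Q₂ h₁ h₂ => (Finite.equivFin κ).injective (he Q₁ Q₂ h₁ h₂)⟩

theorem isMonochromaticOn_comp_map_iff (ι : S ↪[L] M) (e : H ↪[L] S) (χ : Copy P M → κ) :
    IsMonochromaticOn (χ ∘ Copy.map ι) e ↔ IsMonochromaticOn χ (ι.comp e) := by
  have hsub (Q : Copy P S) :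
      ((Copy.map ι Q).1 : Set M) ⊆ range (ι.comp e) ↔ (Q.1 : Set S) ⊆ range e := by
    rw [Copy.coe_map, show range (ι.comp e) = ι '' range e from range_comp ι e,
      image_subset_image_iff ι.injective]
  constructor
  · intro h Q₁ Q₂ h₁ h₂
    obtain ⟨Q₁, rfl⟩ := Copy.exists_map_eq ι Q₁ (h₁.trans (range_comp_subset_range e ι))
    obtain ⟨Q₂, rfl⟩ := Copy.exists_map_eq ι Q₂ (h₂.trans (range_comp_subset_range e ι))
    exact h Q₁ Q₂ ((hsub Q₁).1 h₁) ((hsub Q₂).1 h₂)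
  · exact fun h Q₁ Q₂ h₁ h₂ => h _ _ ((hsub Q₁).2 h₁) ((hsub Q₂).2 h₂)

theorem isOpen_setOf_isMonochromaticOn [TopologicalSpace κ] [DiscreteTopology κ] [Finite H]
    (e : H ↪[L] M) : IsOpen {χ : Copy P M → κ | IsMonochromaticOn χ e} := by
  have hfin := Copy.finite_setOf_subset (P := P) (finite_range e)
  have hopen (Q₁ Q₂ : Copy P M) : IsOpen {χ : Copy P M → κ | χ Q₁ = χ Q₂} := by
    have := (isOpen_discrete {p : κ × κ | p.1 = p.2}).preimage
      ((continuous_apply (A := fun _ => κ) Q₁).prodMk (continuous_apply (A := fun _ => κ) Q₂))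
    exact this
  convert hfin.isOpen_biInter fun Q₁ _ => hfin.isOpen_biInter fun Q₂ _ => hopen Q₁ Q₂ using 1
  ext χ
  simp only [IsMonochromaticOn, mem_ofPred_eq, mem_iInter]
  exact ⟨fun h Q₁ h₁ Q₂ h₂ => h Q₁ Q₂ h₁ h₂, fun h Q₁ Q₂ h₁ h₂ => h Q₁ h₁ Q₂ h₂⟩

theorem exists_coloring_forall_not_isMonochromaticOn {M : Type*} [L.Structure M]
    [TopologicalSpace κ] [DiscreteTopology κ] [Finite κ] [Nonempty κ] [Finite H]
    (hbad : ∀ S ∈ L.age M, ∃ χ : Copy P S → κ, ∀ e : H ↪[L] S, ¬ IsMonochromaticOn χ e) :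
    ∃ χ : Copy P M → κ, ∀ e : H ↪[L] M, ¬ IsMonochromaticOn χ e := by
  let C (e : H ↪[L] M) : Set (Copy P M → κ) := {χ | IsMonochromaticOn χ e}ᶜ
  suffices hfip : ∀ u : Finset (H ↪[L] M), (univ ∩ ⋂ e ∈ u, C e).Nonempty by
    obtain ⟨χ, -, hχ⟩ := isCompact_univ.inter_iInter_nonempty C
      (fun e => (isOpen_setOf_isMonochromaticOn e).isClosed_compl) hfip
    exact ⟨χ, mem_iInter.1 hχ⟩
  intro u
  set T := Substructure.closure L (⋃ e ∈ u, range e)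
  have hT : ∀ e ∈ u, ∀ x, e x ∈ T := fun e he x =>
    Substructure.subset_closure (mem_biUnion he (mem_range_self x))
  obtain ⟨χT, hχT⟩ := hbad ⟨T, inferInstance⟩ (age.fg_substructure
    (Substructure.fg_closure (u.finite_toSet.biUnion fun e _ => finite_range e)))
  let χ := Function.extend (Copy.map T.subtype) χT fun _ => Classical.arbitrary κ
  have hχ : χ ∘ Copy.map T.subtype = χT := Function.extend_comp (Copy.map_injective _) _ _
  refine ⟨χ, mem_univ χ, mem_iInter₂.2 fun e he hmono => hχT (e.codRestrict T (hT e he)) ?_⟩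
  rw [← hχ, isMonochromaticOn_comp_map_iff, Embedding.subtype_comp_codRestrict]
  exact hmono

end Colorings

theorem ExtremelyAmenable.exists_mem_forall_smul_eq {G : Type*} [Group G] [TopologicalSpace G]
    (hG : ExtremelyAmenable G) {X : Type} [TopologicalSpace X] [CompactSpace X] [T2Space X]
    [MulAction G X] (hc : Continuous fun p : G × X => p.1 • p.2) (Y : SubMulAction G X)
    (hY : IsClosed (Y : Set X)) (hne : (Y : Set X).Nonempty) :
    ∃ x ∈ Y, ∀ g : G, g • x = x := by
  have : CompactSpace Y := isCompact_iff_compactSpace.1 hY.isCompact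
  have : Nonempty Y := hne.to_subtype
  obtain ⟨y, hy⟩ := hG Y <| continuous_induced_rng.2 <|
    hc.comp (continuous_id.prodMap continuous_subtype_val)
  exact ⟨y, y.2, fun g => congrArg Subtype.val (hy g)⟩

section ArrowAction

attribute [local instance] arrowAction

theorem continuous_smul_arrowAction {G A B : Type*} [Group G] [TopologicalSpace G]
    [MulAction G A] [TopologicalSpace B]
    (h : ∀ (a : A) (g₀ : G), ∀ᶠ g in 𝓝 g₀, g⁻¹ • a = g₀⁻¹ • a) :
    Continuous fun p : G × (A → B) => p.1 • p.2 := by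
  refine continuous_pi fun a => continuous_iff_continuousAt.2 fun p₀ => ?_
  refine ((continuous_apply (p₀.1⁻¹ • a)).comp continuous_snd).continuousAt.congr ?_
  filter_upwards [(continuous_fst.tendsto p₀).eventually (h a p₀.1)] with p hp
  exact congrArg p.2 hp.symm

section

variable {L : Language} {P : CategoryTheory.Bundled L.Structure} {H M : Type*}
  [L.Structure H] [L.Structure M] {κ : Type*}

theorem isMonochromaticOn_smul_iff (g : M ≃[L] M) (χ : Copy P M → κ) (e : H ↪[L] M) :
    IsMonochromaticOn (g • χ) e ↔ IsMonochromaticOn χ (g⁻¹.toEmbedding.comp e) :=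
  isMonochromaticOn_comp_map_iff _ e χ

theorem apply_eq_of_forall_smul_eq (hhom : L.IsUltrahomogeneous M) [Finite P]
    {χ : Copy P M → κ} (hχ : ∀ g : M ≃[L] M, g • χ = χ) (Q Q' : Copy P M) : χ Q = χ Q' := by
  obtain ⟨g, rfl⟩ := Copy.exists_smul_eq hhom Q' Q
  have := congrFun (hχ g) (g • Q')
  change χ (g⁻¹ • g • Q') = _ at this
  rw [inv_smul_smul] at this
  exact this.symm

end

theorem ramseyClass_age_of_extremelyAmenable {L : Language} {M : Type} [L.Structure M]
    (hrel : ∀ i, IsEmpty (L.Functions i)) (hhom : L.IsUltrahomogeneous M)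
    (hEA : ExtremelyAmenable (M ≃[L] M)) : RamseyClass (L.age M) := by
  have : L.IsRelational := hrel
  intro k hk H hH P hP
  have : Finite H := hH.1.finite
  have : Finite P := hP.1.finite
  have : Nonempty (Fin k) := ⟨⟨0, hk⟩⟩
  show ∃ S ∈ L.age M, ∀ χ : Copy P S → Fin k, ∃ e : H ↪[L] S, IsMonochromaticOn χ e
  by_contra! hbad
  obtain ⟨χ₀, hχ₀⟩ := exists_coloring_forall_not_isMonochromaticOn hbad
  let Y : SubMulAction (M ≃[L] M) (Copy P M → Fin k) :=
    { carrier := ⋂ e : H ↪[L] M, {χ | IsMonochromaticOn χ e}ᶜ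
      smul_mem' := fun g χ hχ => mem_iInter.2 fun e =>
        (isMonochromaticOn_smul_iff g χ e).not.2 (mem_iInter.1 hχ _) }
  obtain ⟨χ, hχY, hχ⟩ := hEA.exists_mem_forall_smul_eq
    (continuous_smul_arrowAction fun Q g₀ => Q.eventually_inv_smul_eq g₀) Y
    (isClosed_iInter fun e => (isOpen_setOf_isMonochromaticOn e).isClosed_compl)
    ⟨χ₀, mem_iInter.2 hχ₀⟩
  obtain ⟨e⟩ := hH.2
  exact mem_iInter.1 hχY e fun Q₁ Q₂ _ _ => apply_eq_of_forall_smul_eq hhom hχ Q₁ Q₂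

end ArrowAction

theorem exists_forall_smul_eq_of_forall_finset_cover {G X : Type*} [Monoid G] [TopologicalSpace X]
    [CompactSpace X] [T2Space X] [MulAction G X] (hc : ∀ g : G, Continuous (g • · : X → X))
    (h : ∀ (F : Finset G) (𝒰 : Finset (Set X)), (∀ U ∈ 𝒰, IsOpen U) →
      ⋃₀ (𝒰 : Set (Set X)) = univ → ∃ x, ∃ U ∈ 𝒰, ∀ g ∈ F, g • x ∈ U) :
    ∃ x : X, ∀ g : G, g • x = x := by
  classical
  by_contra! hmoved
  choose g hg using hmoved
  have hsep (x : X) : ∃ V, IsOpen V ∧ x ∈ V ∧ ∀ y ∈ V, g x • y ∉ V := by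
    obtain ⟨u, w, hu, hw, hgu, hxw, huw⟩ := t2_separation (hg x)
    exact ⟨w ∩ (g x • ·) ⁻¹' u, hw.inter (hu.preimage (hc _)), ⟨hxw, hgu⟩,
      fun y hy hgy => huw.le_bot ⟨hy.2, hgy.1⟩⟩
  choose V hVo hxV hV using hsep
  obtain ⟨s, hs⟩ := isCompact_univ.elim_finite_subcover V hVo fun x _ => mem_iUnion.2 ⟨x, hxV x⟩
  have hcover : ⋃₀ ((s.image V : Finset (Set X)) : Set (Set X)) = univ := by
    rw [Finset.coe_image, sUnion_image]
    exact univ_subset_iff.1 hs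
  obtain ⟨y, U, hU, hyU⟩ := h (insert 1 (s.image g)) (s.image V) (by simpa using fun x _ => hVo x)
    hcover
  obtain ⟨x, hx, rfl⟩ := Finset.mem_image.1 hU
  -- `1 ∈ F` puts `y` itself in `V x`, which `g x` moves `y` out of.
  exact hV x y (by simpa using hyU 1 (Finset.mem_insert_self _ _))
    (hyU (g x) (Finset.mem_insert_of_mem (Finset.mem_image_of_mem g hx)))

section

variable {L : Language} {M : Type*} [L.Structure M]

theorem exists_finset_forall_smul_mem {X : Type*} [UniformSpace X] [CompactSpace X]
    [MulAction (M ≃[L] M) X] (hc : Continuous fun p : (M ≃[L] M) × X => p.1 • p.2)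
    {t : Set (X × X)} (ht : t ∈ 𝓤 X) :
    ∃ A : Finset M, ∀ v : M ≃[L] M, (∀ a ∈ A, v a = a) → ∀ y : X, (y, v • y) ∈ t := by
  obtain ⟨N, hN, hNt⟩ := isCompact_univ.mem_uniformity_of_prod
    (f := fun (g : M ≃[L] M) (y : X) => g • y) hc.continuousOn (mem_univ 1)
    (symm_le_uniformity ht)
  rw [nhdsWithin_univ] at hN
  obtain ⟨A, hA⟩ := exists_finset_fixing_subset_of_mem_nhds_one hN
  exact ⟨A, fun v hv y => by simpa using hNt v (hA hv) y (mem_univ y)⟩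

theorem apply_smul_self_mem_comp (hord : Ordered L M) {A : L.Substructure M} [Finite A]
    {X : Type*} [MulAction (M ≃[L] M) X] {t : Set (X × X)}
    (hA : ∀ v : M ≃[L] M, (∀ a ∈ A, v a = a) → ∀ y : X, (y, v • y) ∈ t) {x₀ : X}
    {χ : Copy (CategoryTheory.Bundled.of A) M → X}
    (hχ : ∀ Q, ∃ g : M ≃[L] M, g • Copy.self A = Q ∧ (χ Q, g⁻¹ • x₀) ∈ t) (g : M ≃[L] M) :
    (χ (g • Copy.self A), g⁻¹ • x₀) ∈ t ○ t := by
  obtain ⟨h, hh, hχh⟩ := hχ (g • Copy.self A)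
  have hv := Copy.apply_eq_of_smul_self_eq hord (v := g⁻¹ * h) (by rw [mul_smul, hh, inv_smul_smul])
  have := hA _ hv (h⁻¹ • x₀)
  rw [smul_smul, mul_assoc, mul_inv_cancel, mul_one] at this
  exact ⟨_, hχh, this⟩

end

variable {L : Language} {M : Type} [L.Structure M]

theorem RamseyClass.exists_forall_apply_mul_inv_smul_self_eq [L.IsRelational]
    (hram : RamseyClass (L.age M)) (hhom : L.IsUltrahomogeneous M) {A : L.Substructure M}
    [Finite A] (F : Finset (M ≃[L] M)) {κ : Type*} [Finite κ] [Nonempty κ]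
    (χ : Copy (CategoryTheory.Bundled.of A) M → κ) :
    ∃ δ : M ≃[L] M, ∀ g ∈ F, χ ((δ * g⁻¹) • Copy.self A) = χ (δ • Copy.self A) := by
  have hAfin : (A : Set M).Finite := Set.finite_coe_iff.1 ‹Finite A›
  set B := Substructure.closure L ((A : Set M) ∪ ⋃ g ∈ F, (g⁻¹ : M ≃[L] M) '' A)
  have hBfg : B.FG := Substructure.fg_closure
    (hAfin.union (F.finite_toSet.biUnion fun g _ => hAfin.image _))
  obtain ⟨S, hS, hmono⟩ := hram.exists_isMonochromaticOn (κ := κ)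
    (age.fg_substructure hBfg) (age.fg_substructure (Substructure.FG.of_finite (s := A)))
  obtain ⟨ι⟩ := hS.2
  obtain ⟨e, he⟩ := hmono (χ ∘ Copy.map ι)
  replace he := (isMonochromaticOn_comp_map_iff ι e χ).1 he
  obtain ⟨δ, hδ⟩ := hhom B hBfg (ι.comp e)
  have hsub {h : M ≃[L] M} (hh : ∀ a ∈ A, h a ∈ B) :
      (((δ * h) • Copy.self A).1 : Set M) ⊆ range (ι.comp e) := by
    rw [hδ, Copy.coe_smul]
    change (δ ∘ h) '' A ⊆ range (δ ∘ Subtype.val)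
    rw [image_comp, range_comp, Subtype.range_coe]
    exact image_mono (image_subset_iff.2 hh)
  refine ⟨δ, fun g hg => he _ _ (hsub fun a ha =>
    Substructure.subset_closure (Or.inr (mem_biUnion hg ⟨a, ha, rfl⟩))) ?_⟩
  simpa using hsub (h := 1) fun a ha => Substructure.subset_closure (Or.inl ha)

theorem exists_forall_smul_mem_of_ramseyClass_age [L.IsRelational] (hord : Ordered L M)
    (hhom : L.IsUltrahomogeneous M) (hram : RamseyClass (L.age M)) {X : Type*} [UniformSpace X]
    [CompactSpace X] [Nonempty X] [MulAction (M ≃[L] M) X]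
    (hc : Continuous fun p : (M ≃[L] M) × X => p.1 • p.2) (F : Finset (M ≃[L] M))
    {E : Set (X × X)} (hE : E ∈ 𝓤 X) :
    ∃ x c : X, ∀ g ∈ F, (c, g • x) ∈ E := by
  obtain ⟨t, ht, htsymm, htE⟩ := comp_symm_mem_uniformity_sets hE
  obtain ⟨A, hA⟩ := exists_finset_forall_smul_mem hc ht
  obtain ⟨N, hNfin, hN⟩ := isCompact_univ.totallyBounded t ht
  have : Finite N := hNfin
  let x₀ : X := Classical.arbitrary X
  have hnet (y : X) : ∃ c : N, ((c : X), y) ∈ t := by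
    obtain ⟨c, hc, hyc⟩ := mem_iUnion₂.1 (hN (mem_univ y))
    exact ⟨⟨c, hc⟩, SetRel.symm t hyc⟩
  have : Nonempty N := ⟨(hnet x₀).choose⟩
  set A' := Substructure.closure L (A : Set M)
  have : Finite A' := (Substructure.fg_closure A.finite_toSet).finite
  have hcol (Q : Copy (CategoryTheory.Bundled.of A') M) :
      ∃ c : N, ∃ g : M ≃[L] M, g • Copy.self A' = Q ∧ ((c : X), g⁻¹ • x₀) ∈ t := by
    obtain ⟨g, hg⟩ := Copy.exists_smul_eq hhom (Copy.self A') Q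
    obtain ⟨c, hc⟩ := hnet (g⁻¹ • x₀)
    exact ⟨c, g, hg, hc⟩
  choose χ hχ using hcol
  obtain ⟨δ, hδ⟩ := hram.exists_forall_apply_mul_inv_smul_self_eq hhom F χ
  refine ⟨δ⁻¹ • x₀, χ (δ • Copy.self A'), fun g hg => htE ?_⟩
  have := apply_smul_self_mem_comp hord (A := A') (χ := fun Q => (χ Q : X))
    (fun v hv => hA v fun a ha => hv a (Substructure.subset_closure ha)) hχ (δ * g⁻¹)
  rwa [hδ g hg, mul_inv_rev, inv_inv, mul_smul] at this

theorem extremelyAmenable_of_ramseyClass_age (hrel : ∀ i, IsEmpty (L.Functions i))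
    (hord : Ordered L M) (hhom : L.IsUltrahomogeneous M) (hram : RamseyClass (L.age M)) :
    ExtremelyAmenable (M ≃[L] M) := by
  have : L.IsRelational := hrel
  intro X _ _ _ _ _ hc
  let _ : UniformSpace X := uniformSpaceOfCompactR1
  refine exists_forall_smul_eq_of_forall_finset_cover
    (fun g => hc.comp (continuous_const.prodMk continuous_id)) fun F 𝒰 hopen hcover => ?_
  obtain ⟨E, hE, hleb⟩ := lebesgue_number_lemma_sUnion isCompact_univ hopen hcover.ge
  obtain ⟨x, c, hx⟩ := exists_forall_smul_mem_of_ramseyClass_age hord hhom hram hc F hE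
  obtain ⟨U, hU, hcU⟩ := hleb c (mem_univ c)
  exact ⟨x, U, hU, fun g hg => hcU (hx g hg)⟩

end PaperDef

namespace PaperDef

theorem ramsey_iff_automorphism_group_extremely_amenable_general
    (L : Language) (M : Type) [L.Structure M]
    (hrel : ∀ i, IsEmpty (L.Functions i))
    (hord : Ordered L M) (hhom : L.IsUltrahomogeneous M) :
    RamseyClass (L.age M) ↔ ExtremelyAmenable (M ≃[L] M) :=
  ⟨extremelyAmenable_of_ramseyClass_age hrel hord hhom,
    ramseyClass_age_of_extremelyAmenable hrel hhom⟩

/-- **Theorem of Kechris, Pestov and Todorcevic.**  A countably infinite ordered homogeneous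
structure with countable relational signature has a Ramsey age if and only if its
automorphism group (with the topology of pointwise convergence) is extremely amenable. -/
theorem ramsey_iff_automorphism_group_extremely_amenable
    (L : Language) (M : Type) [L.Structure M] [Countable M] [Infinite M]
    (hrel : ∀ i, IsEmpty (L.Functions i)) (hcnt : Countable (Σ i, L.Relations i))
    (hord : Ordered L M) (hhom : L.IsUltrahomogeneous M) :
    RamseyClass (L.age M) ↔ ExtremelyAmenable (M ≃[L] M) :=
  ramsey_iff_automorphism_group_extremely_amenable_general L M hrel hord hhom

end PaperDef
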